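/- arXiv:1203.3645 — 8 statements merged into one kernel-verified Lean document; each statement's English description precedes it below -/
import Mathlib

section
/- Let G be a group and x an automorphism of G such that for every g in G there exists n with [g, x, x, ..., x] (n times) = 1 (commutators taken in the holomorph). If G is a torsion-free abelian group and x has finite order, then x is the identity automorphism. -/
/-!
Write `D a = a⁻¹ * x a`, so that `x a = a * D a`. If `x` fixes `c = D g`, then
`(x ^ j) g = g * c ^ j`; hence `x ^ k = 1` forces `c ^ k = 1`, and torsion-freeness gives `c = 1`.
Thus `D (D g) = 1` implies `D g = 1`, and descending along `D^[n] g = 1` yields `D g = 1`,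
i.e. `x` fixes every `g`.
-/

/-- The Mathlib (Dec 2024) definition, removed since: a monoid is torsion-free if no
non-identity element has finite order. -/
def Monoid.IsTorsionFree (G : Type*) [Monoid G] : Prop :=
  ∀ g : G, g ≠ 1 → ¬IsOfFinOrder g

theorem Function.apply_eq_of_iterate_eq {α : Type*} {f : α → α} {b : α} (hb : f b = b)
    (hf : ∀ a, f (f a) = b → f a = b) : ∀ (n : ℕ) (a : α), f^[n] a = b → f a = b
  | 0, _, rfl => hb
  | n + 1, a, h => hf a (Function.apply_eq_of_iterate_eq hb hf n (f a) h)

namespace MulAut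

variable {G : Type*} [Group G] (x : MulAut G)

theorem pow_apply_of_apply_inv_mul_apply {g : G} (hc : x (g⁻¹ * x g) = g⁻¹ * x g) (j : ℕ) :
    (x ^ j) g = g * (g⁻¹ * x g) ^ j := by
  induction j with
  | zero => simp
  | succ j ih =>
    rw [pow_succ', mul_apply, ih, map_mul, map_pow, hc, pow_succ', ← mul_assoc,
      mul_inv_cancel_left]

theorem inv_mul_apply_eq_one_of_apply_inv_mul_apply (hTF : Monoid.IsTorsionFree G)
    {k : ℕ} (hk : 0 < k) (hx : x ^ k = 1) {g : G}
    (hc : x (g⁻¹ * x g) = g⁻¹ * x g) : g⁻¹ * x g = 1 := by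
  have hck : (g⁻¹ * x g) ^ k = 1 := by
    simpa [hx] using (x.pow_apply_of_apply_inv_mul_apply hc k).symm
  by_contra hne
  exact hTF _ hne (isOfFinOrder_iff_pow_eq_one.mpr ⟨k, hk, hck⟩)

end MulAut

/-- A nil-automorphism of finite order of a torsion-free abelian group is the identity. -/
theorem stmt_0 {G : Type*} [CommGroup G] (hTF : Monoid.IsTorsionFree G)
    (x : MulAut G)
    (hnil : ∀ g : G, ∃ n : ℕ, (fun a => a⁻¹ * x a)^[n] g = 1)
    (k : ℕ) (hk : 0 < k) (hx : x ^ k = 1) :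
    x = 1 := by
  have hstep : ∀ a : G, (a⁻¹ * x a)⁻¹ * x (a⁻¹ * x a) = 1 → a⁻¹ * x a = 1 :=
    fun a h => x.inv_mul_apply_eq_one_of_apply_inv_mul_apply hTF hk hx (inv_mul_eq_one.mp h).symm
  ext g
  obtain ⟨n, hn⟩ := hnil g
  have hg : g⁻¹ * x g = 1 :=
    Function.apply_eq_of_iterate_eq (f := fun a => a⁻¹ * x a) (by simp) hstep n g hn
  simpa using (inv_mul_eq_one.mp hg).symm
end

section
/- Let G be an abelian p-group of exponent dividing p^l, and let H be a group of automorphisms of G such that [g,ₙh] = 1 for all g ∈ G and h ∈ H. Then the exponent of H is bounded by a function of p^l and n only. -/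
/-!
Write an automorphism `h` of the abelian group `G` as `1 + d` in the endomorphism ring of `G`,
where `d a = a⁻¹ * h a`; unipotence says `d ^ n = 0`, and `q = p ^ l` is zero in that ring.
In the binomial expansion of `(1 + d) ^ (q ^ n)` the terms with `k ≥ n` vanish because of `d`,
and those with `0 < k < n` because `q` divides `(q ^ n).choose k` (Kummer), so `h ^ (q ^ n) = 1`.
-/

open Finset

theorem Nat.Prime.pow_dvd_choose_pow_pow {p l n k : ℕ} (hp : p.Prime) (hk0 : k ≠ 0)
    (hkn : k < n) : p ^ l ∣ ((p ^ l) ^ n).choose k := by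
  rcases l.eq_zero_or_pos with rfl | hl
  · simp
  rw [← pow_mul]
  have hn_le : n ≤ l * n := Nat.le_mul_of_pos_left n hl
  have hk_le : k ≤ p ^ (l * n) :=
    (Nat.lt_pow_self hp.one_lt).le.trans (Nat.pow_le_pow_right hp.pos (by omega))
  rw [hp.pow_dvd_iff_le_factorization (Nat.choose_pos hk_le).ne',
    Nat.factorization_choose_prime_pow hp hk_le hk0]
  -- `v_p(k) < k ≤ n - 1 ≤ l * (n - 1)`
  have hv : k.factorization p < k := Nat.factorization_lt p hk0
  have hn_sub : n - 1 ≤ l * (n - 1) := Nat.le_mul_of_pos_left _ hl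
  have hln : l * n = l * (n - 1) + l := by rw [← Nat.mul_succ]; congr 1; omega
  omega

theorem one_add_pow_prime_pow_pow_eq_one {R : Type*} [Semiring R] {p l n : ℕ} {d : R}
    (hp : p.Prime) (hq : ((p ^ l : ℕ) : R) = 0) (hd : d ^ n = 0) :
    (1 + d) ^ ((p ^ l) ^ n) = 1 := by
  rw [add_comm, (Commute.one_right d).add_pow,
    sum_eq_single_of_mem 0 (mem_range.mpr (Nat.succ_pos _))]
  · simp
  intro k _ hk0
  rcases lt_or_ge k n with hkn | hnk
  · obtain ⟨c, hc⟩ := hp.pow_dvd_choose_pow_pow (l := l) hk0 hkn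
    rw [hc, Nat.cast_mul, hq, zero_mul, mul_zero]
  · rw [← Nat.add_sub_cancel' hnk, pow_add, hd, zero_mul, zero_mul, zero_mul]

theorem MulAut.pow_prime_pow_pow_eq_one {G : Type*} [CommGroup G] {p l n : ℕ} (hp : p.Prime)
    (hexp : ∀ g : G, g ^ p ^ l = 1) (h : MulAut G)
    (hunip : ∀ g : G, (fun a => a⁻¹ * h a)^[n] g = 1) :
    h ^ (p ^ l) ^ n = 1 := by
  let ρ := Representation.ofMulDistribMulAction (MulAut G) G
  have hq : ((p ^ l : ℕ) : Module.End ℤ (Additive G)) = 0 := by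
    refine LinearMap.ext fun a => ?_
    rw [Module.End.natCast_apply, ← ofMul_toMul a, ← ofMul_pow, hexp]
    rfl
  have hsemiconj : Function.Semiconj Additive.ofMul (fun a => a⁻¹ * h a) ⇑(ρ h - 1) := by
    intro a
    show Additive.ofMul (a⁻¹ * h a) = ρ h (Additive.ofMul a) - Additive.ofMul a
    rw [ofMul_mul, ofMul_inv, neg_add_eq_sub]
    rfl
  have hd : (ρ h - 1) ^ n = 0 := by
    refine LinearMap.ext fun a => ?_
    rw [Module.End.pow_apply, ← ofMul_toMul a, ← (hsemiconj.iterate_right n).eq, hunip]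
    rfl
  have hρ : ρ (h ^ (p ^ l) ^ n) = 1 := by
    rw [map_pow, ← add_sub_cancel (1 : Module.End ℤ (Additive G)) (ρ h)]
    exact one_add_pow_prime_pow_pow_eq_one hp hq hd
  ext g
  exact congr($hρ (Additive.ofMul g))

/-- The exponent of a group of `n`-unipotent automorphisms of an abelian `p`-group of
exponent dividing `p^l` is bounded in terms of `p^l` and `n` only. -/
theorem stmt_5 :
    ∃ f : ℕ → ℕ → ℕ, (∀ q n, 0 < f q n) ∧
      ∀ (p l n : ℕ), p.Prime →
        ∀ (G : Type) (_ : CommGroup G),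
          (∀ g : G, g ^ p ^ l = 1) →
          ∀ H : Subgroup (MulAut G),
            (∀ h ∈ H, ∀ g : G, (fun a => a⁻¹ * h a)^[n] g = 1) →
            ∀ h ∈ H, h ^ f (p ^ l) n = 1 := by
  -- `max 1` only matters for `q = 0`, where `q ^ n` could be `0`
  refine ⟨fun q n => max 1 (q ^ n), fun q n => by positivity, ?_⟩
  intro p l n hp G _ hexp H hunip h hh
  have hpos : 1 ≤ (p ^ l) ^ n := Nat.one_le_pow _ _ (pow_pos hp.pos l)
  simp only [max_eq_right hpos]
  exact MulAut.pow_prime_pow_pow_eq_one hp hexp h (hunip h hh)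
end

section
/- Let A be an abelian group and H a group of n-unipotent automorphisms of A. If [A, H] has finite exponent, then H has finite exponent. -/
/-- If `H` is a group of `n`-unipotent automorphisms of an abelian group `A` and
`[A, H]` has finite exponent, then `H` has finite exponent. -/
theorem stmt_7 {A : Type*} [CommGroup A] (n : ℕ)
    (H : Subgroup (MulAut A))
    (hunip : ∀ h ∈ H, ∀ a : A, (fun b => b⁻¹ * h b)^[n] a = 1)
    (hexp : ∃ e : ℕ, 0 < e ∧
      ∀ x ∈ Subgroup.closure {x : A | ∃ a : A, ∃ h ∈ H, x = a⁻¹ * h a}, x ^ e = 1) :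
    ∃ e : ℕ, 0 < e ∧ ∀ h ∈ H, h ^ e = 1 := by
  obtain ⟨e, he, hexp⟩ := hexp
  refine ⟨e * n.factorial, Nat.mul_pos he n.factorial_pos, ?_⟩
  intro h hH
  set m := e * n.factorial with hm
  have hm0 : 0 < m := Nat.mul_pos he n.factorial_pos
  set f : A → A := fun b => b⁻¹ * h b with hf
  set φ : AddMonoid.End (Additive A) :=
    (MonoidHom.toAdditive (h.toMonoidHom) : Additive A →+ Additive A) with hφ
  set d : AddMonoid.End (Additive A) := φ - 1 with hd
  have hdapp : ∀ a : A, (d (Additive.ofMul a)).toMul = f a := by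
    intro a
    show h a / a = f a
    simp [hf, div_eq_mul_inv, mul_comm]
  have hdpow : ∀ k : ℕ, ∀ a : A, ((d ^ k) (Additive.ofMul a)).toMul = f^[k] a := by
    intro k
    induction k with
    | zero => intro a; rfl
    | succ k ih =>
      intro a
      rw [pow_succ', Function.iterate_succ_apply']
      have h1 : (d * d ^ k) (Additive.ofMul a) = d ((d ^ k) (Additive.ofMul a)) := rfl
      rw [h1, ← ih a]
      exact hdapp _
  have hdn : d ^ n = 0 := by
    refine AddMonoidHom.ext fun x => ?_
    have h1 := hdpow n x.toMul
    have h2 := hunip h hH x.toMul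
    simp only [← hf] at h2
    rw [h2] at h1
    exact h1
  have hed : e • d = 0 := by
    refine AddMonoidHom.ext fun x => ?_
    have hmem : (d x).toMul ∈ {y : A | ∃ a : A, ∃ g ∈ H, y = a⁻¹ * g a} :=
      ⟨x.toMul, h, hH, (hdapp x.toMul)⟩
    have h1 : (d x).toMul ^ e = 1 := hexp _ (Subgroup.subset_closure hmem)
    show e • (d x) = 0
    exact h1
  have hedk : ∀ k : ℕ, 1 ≤ k → e • d ^ k = 0 := by
    intro k hk
    obtain ⟨j, rfl⟩ := Nat.exists_eq_add_of_le hk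
    rw [pow_add, pow_one, ← smul_mul_assoc, hed, zero_mul]
  have hφ1 : φ = d + 1 := by rw [hd, sub_add_cancel]
  have hbin : φ ^ m = 1 := by
    rw [hφ1, (Commute.one_right d).add_pow]
    rw [Finset.sum_eq_single 0]
    · simp
    · intro k hkmem hk0
      rcases Nat.exists_eq_succ_of_ne_zero hk0 with ⟨k', rfl⟩
      have hk1 : 1 ≤ k' + 1 := Nat.le_add_left 1 k'
      rcases le_or_gt (k' + 1) n with hkn | hnk
      · have hkdvd : (k' + 1) ∣ n.factorial := Nat.dvd_factorial hk1 hkn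
        obtain ⟨t, ht⟩ := hkdvd
        have hchoose : e ∣ m.choose (k' + 1) := by
          have key := Nat.add_one_mul_choose_eq (m - 1) k'
          have hm1 : m - 1 + 1 = m := Nat.succ_pred_eq_of_pos hm0
          simp only [Nat.succ_eq_add_one, hm1] at key
          -- key : m * (m-1).choose k' = m.choose (k'+1) * (k'+1)
          have hdvd : e * (k' + 1) ∣ m.choose (k' + 1) * (k' + 1) := by
            rw [← key]
            exact Dvd.dvd.mul_right ⟨t, by rw [hm, ht]; ring⟩ _
          exact (Nat.mul_dvd_mul_iff_right (Nat.succ_pos k')).mp hdvd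
        obtain ⟨c, hc⟩ := hchoose
        rw [one_pow, mul_one, hc]
        have hcast : (↑(e * c) : AddMonoid.End (Additive A)) =
            (e * c) • (1 : AddMonoid.End (Additive A)) := by simp [nsmul_eq_mul]
        rw [hcast, mul_smul_comm, mul_one, mul_comm e c, mul_smul, hedk _ hk1, smul_zero]
      · have hzk : d ^ (k' + 1) = d ^ n * d ^ (k' + 1 - n) := by
          rw [← pow_add]
          congr 1
          omega
        rw [hzk, hdn, zero_mul, zero_mul, zero_mul]
    · intro hmem
      exact absurd (Finset.mem_range.mpr (Nat.lt_succ_of_le (Nat.zero_le m))) hmem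
  have hφpow : ∀ k : ℕ, ∀ a : A, ((φ ^ k) (Additive.ofMul a)).toMul = (h ^ k) a := by
    intro k
    induction k with
    | zero => intro a; rfl
    | succ k ih =>
      intro a
      rw [pow_succ', pow_succ']
      have h1 : (φ * φ ^ k) (Additive.ofMul a) = φ ((φ ^ k) (Additive.ofMul a)) := rfl
      have h2 : ((h * h ^ k : MulAut A)) a = h ((h ^ k) a) := rfl
      rw [h1, h2, ← ih a]
      rfl
  ext a
  have hfin := hφpow m a
  rw [hbin] at hfin
  simpa using hfin.symm
end

section
/- Let A be an abelian group whose subgroup [A, H] has exponent p (a prime), and let H be a group of n-unipotent automorphisms of A. If k is defined by p^(k−1) ≤ n < p^k, then h^(p^k) acts trivially on A for every h ∈ H; in particular H has exponent dividing p^k. -/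
/-- If `[A, H]` has exponent `p` and `H` consists of `n`-unipotent automorphisms of the
abelian group `A`, and `p^(k-1) ≤ n < p^k`, then `h^(p^k)` acts trivially on `A` for
every `h ∈ H`; in particular `H` has exponent dividing `p^k`. -/
theorem stmt_8 {A : Type*} [CommGroup A] (p n k : ℕ) (hp : p.Prime)
    (H : Subgroup (MulAut A))
    (hunip : ∀ h ∈ H, ∀ a : A, (fun b => b⁻¹ * h b)^[n] a = 1)
    (hexp : ∀ x ∈ Subgroup.closure {x : A | ∃ a : A, ∃ h ∈ H, x = a⁻¹ * h a}, x ^ p = 1)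
    (hk₁ : p ^ (k - 1) ≤ n) (hk₂ : n < p ^ k) :
    (∀ h ∈ H, ∀ a : A, (h ^ p ^ k) a = a) ∧ ∀ h ∈ H, h ^ p ^ k = 1 := by
  have key : ∀ h ∈ H, ∀ a : A, (h ^ p ^ k) a = a := by
    intro h hH a
    set f : Module.End ℤ (Additive A) :=
      AddMonoidHom.toIntLinearMap (MonoidHom.toAdditive (MulEquiv.toMonoidHom h)) with hf
    set D : Module.End ℤ (Additive A) := f - 1 with hD
    have hfapp : ∀ b : A, f (Additive.ofMul b) = Additive.ofMul (h b) := fun b => rfl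
    have hDapp : ∀ b : A, D (Additive.ofMul b) = Additive.ofMul (b⁻¹ * h b) := by
      intro b
      show f (Additive.ofMul b) - Additive.ofMul b = _
      rw [hfapp, ofMul_mul, ofMul_inv]
      abel
    have hDiter : ∀ (m : ℕ) (b : A),
        (D ^ m) (Additive.ofMul b) = Additive.ofMul ((fun c => c⁻¹ * h c)^[m] b) := by
      intro m
      induction m with
      | zero => intro b; simp
      | succ m ih =>
          intro b
          rw [pow_succ, Function.iterate_succ, Module.End.mul_apply, Function.comp_apply,
            hDapp b, ih]
    have hDzero : ∀ i, n ≤ i → ∀ x : Additive A, (D ^ i) x = 0 := by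
      intro i hi x
      obtain ⟨j, rfl⟩ := Nat.exists_eq_add_of_le hi
      rw [add_comm, pow_add, Module.End.mul_apply]
      have hn : (D ^ n) x = 0 := by
        have := hDiter n (Additive.toMul x)
        simpa [hunip h hH] using this
      rw [hn, map_zero]
    have hpDx : ∀ x : Additive A, p • D x = 0 := by
      intro x
      have h1 : D x = Additive.ofMul ((Additive.toMul x)⁻¹ * h (Additive.toMul x)) :=
        hDapp (Additive.toMul x)
      have hmem : ((Additive.toMul x)⁻¹ * h (Additive.toMul x)) ∈
          Subgroup.closure {x : A | ∃ a : A, ∃ h ∈ H, x = a⁻¹ * h a} :=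
        Subgroup.subset_closure ⟨Additive.toMul x, h, hH, rfl⟩
      rw [h1, ← ofMul_pow, hexp _ hmem]
      rfl
    have hpD : ∀ i, 1 ≤ i → ∀ x : Additive A, p • (D ^ i) x = 0 := by
      intro i hi x
      obtain ⟨j, rfl⟩ := Nat.exists_eq_add_of_le hi
      rw [add_comm, pow_add, pow_one, Module.End.mul_apply, ← map_nsmul, hpDx, map_zero]
    have hfD : f = D + 1 := by rw [hD]; abel
    have hbin := (Commute.one_right D).add_pow (p ^ k)
    have happly : ∀ (m : ℕ) (b : A),
        Additive.ofMul ((h ^ m) b) = (f ^ m) (Additive.ofMul b) := by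
      intro m
      induction m with
      | zero => intro b; simp
      | succ m ih =>
          intro b
          rw [pow_succ, pow_succ, MulAut.mul_apply, Module.End.mul_apply, hfapp b, ih]
    have hsum : (f ^ p ^ k) (Additive.ofMul a) = Additive.ofMul a := by
      rw [hfD, hbin]
      simp only [one_pow, mul_one]
      rw [LinearMap.sum_apply]
      have hterm : ∀ i ∈ Finset.range (p ^ k + 1),
          (D ^ i * ((p ^ k).choose i : Module.End ℤ (Additive A))) (Additive.ofMul a)
            = ((p ^ k).choose i) • ((D ^ i) (Additive.ofMul a)) := by
        intro i _
        rw [Module.End.mul_apply, Module.End.natCast_apply, map_nsmul]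
      rw [Finset.sum_congr rfl hterm, Finset.sum_range_succ']
      have hzero : ∀ i ∈ Finset.range (p ^ k),
          ((p ^ k).choose (i + 1)) • ((D ^ (i + 1)) (Additive.ofMul a)) = 0 := by
        intro i hi
        rcases le_or_gt n (i + 1) with hni | hni
        · rw [hDzero _ hni, smul_zero]
        · have hlt : i + 1 < p ^ k := lt_of_lt_of_le hni (le_of_lt hk₂)
          obtain ⟨t, ht⟩ := hp.dvd_choose_pow (Nat.succ_ne_zero i) (Nat.ne_of_lt hlt)
          rw [ht, mul_comm, mul_smul, hpD _ (Nat.le_add_left 1 i), smul_zero]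
      rw [Finset.sum_eq_zero hzero]
      simp
    have := happly (p ^ k) a
    rw [hsum] at this
    exact Additive.ofMul.injective this
  refine ⟨key, fun h hH => ?_⟩
  ext a
  simpa using key h hH a
end

section
/- Let V be a torsion-free nilpotent group and U a normal subgroup of finite index. Then U and V have the same nilpotency class. -/
/-!
Every element of `V` has a positive power in `U`. By induction on `k`, every `b ∈ γₖ V` has a
positive power in `γₖ U · γₖ₊₁ V`: modulo `γₖ₊₂ V` the commutator map `γₖ V × V → γₖ₊₁ V` is
bilinear with central values, so `p ^ m ≡ u ∈ γₖ U` and `y ^ n ∈ U` give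
`⁅p, y⁆ ^ (m * n) ≡ ⁅u, y ^ n⁆ ∈ γₖ₊₁ U`, and in the abelian group `γₖ₊₁ V / γₖ₊₂ V` the elements
with a power in the image of `γₖ₊₁ U` form a subgroup. If the class of `U` were smaller than the
class `d + 1` of `V`, then `γ_d U = 1` and `γ_{d+1} V = 1`, so every element of `γ_d V` would have
finite order; by torsion-freeness `γ_d V = 1`, a contradiction.
-/

open Subgroup
open scoped commutatorElement

section Commutator

variable {G : Type*} [Group G]

theorem commutatorElement_pow_left_of_commute {a b : G} (h : Commute a ⁅a, b⁆) (n : ℕ) :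
    ⁅a ^ n, b⁆ = ⁅a, b⁆ ^ n := by
  induction n with
  | zero => simp
  | succ n ih =>
    rw [pow_succ', commutatorElement_mul_left_eq_conj_mul, ih, (h.pow_right n).eq,
      mul_inv_cancel_right, pow_succ]

theorem commutatorElement_pow_right_of_commute {a b : G} (h : Commute b ⁅a, b⁆) (n : ℕ) :
    ⁅a, b ^ n⁆ = ⁅a, b⁆ ^ n := by
  induction n with
  | zero => simp
  | succ n ih =>
    rw [pow_succ', commutatorElement_mul_right_eq_mul_conj, ih, mul_assoc _ b, (h.pow_right n).eq,
      ← mul_assoc, mul_inv_cancel_right, pow_succ']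

theorem commutatorElement_pow_pow_of_mem_center {a b : G} (h : ∀ m : ℕ, ⁅a ^ m, b⁆ ∈ center G)
    (m n : ℕ) : ⁅a ^ m, b ^ n⁆ = ⁅a, b⁆ ^ (m * n) := by
  have hab : ⁅a, b⁆ ∈ center G := by simpa using h 1
  rw [commutatorElement_pow_right_of_commute (mem_center_iff.mp (h m) b),
    commutatorElement_pow_left_of_commute (mem_center_iff.mp hab a), pow_mul]

theorem commutatorElement_mul_left_of_mem_center {a c : G} (hc : c ∈ center G) (b : G) :
    ⁅c * a, b⁆ = ⁅a, b⁆ := by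
  rw [← mem_center_iff.mp hc a, commutatorElement_mul_left_eq_conj_mul,
    commutatorElement_eq_one_iff_commute.mpr (mem_center_iff.mp hc b).symm, mul_one,
    mul_inv_cancel, one_mul]

theorem QuotientGroup.mk'_mem_center_of_mem_lowerCentralSeries {n : ℕ} {x : G}
    (hx : x ∈ (⊤ : Subgroup G).lowerCentralSeries n) :
    QuotientGroup.mk' ((⊤ : Subgroup G).lowerCentralSeries (n + 1)) x ∈ center _ := by
  refine mem_center_iff.mpr fun q => ?_
  obtain ⟨g, rfl⟩ := QuotientGroup.mk'_surjective _ q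
  refine (commutatorElement_eq_one_iff_mul_comm.mp ?_).symm
  rw [← map_commutatorElement, QuotientGroup.mk'_apply, QuotientGroup.eq_one_iff]
  exact commutator_mem_commutator hx (mem_top g)

end Commutator

namespace Subgroup

variable {G : Type*} [Group G]

theorem exists_pow_mem_of_mem_closure {S : Set G} {A : Subgroup G}
    (hcomm : ∀ x ∈ closure S, ∀ y ∈ closure S, Commute x y)
    (hS : ∀ s ∈ S, ∃ n, 0 < n ∧ s ^ n ∈ A) {x : G} (hx : x ∈ closure S) :
    ∃ n, 0 < n ∧ x ^ n ∈ A := by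
  induction hx using closure_induction with
  | mem s hs => exact hS s hs
  | one => exact ⟨1, one_pos, by simp [one_mem]⟩
  | mul x y hx hy ihx ihy =>
    obtain ⟨m, hm, hxm⟩ := ihx
    obtain ⟨n, hn, hyn⟩ := ihy
    refine ⟨m * n, Nat.mul_pos hm hn, ?_⟩
    rw [(hcomm x hx y hy).mul_pow, pow_mul, mul_comm m n, pow_mul]
    exact mul_mem (pow_mem hxm n) (pow_mem hyn m)
  | inv x _ ih =>
    obtain ⟨n, hn, hxn⟩ := ih
    exact ⟨n, hn, by simpa [inv_pow] using hxn⟩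

variable {U : Subgroup G}

theorem exists_pow_mk'_commutatorElement_mem_map (hU : ∀ g : G, ∃ n, 0 < n ∧ g ^ n ∈ U)
    {k m : ℕ} {p : G} (hp : p ∈ (⊤ : Subgroup G).lowerCentralSeries k) (hm : 0 < m)
    (hpm : p ^ m ∈ (⊤ : Subgroup G).lowerCentralSeries (k + 1) ⊔ U.lowerCentralSeries k) (y : G) :
    ∃ n, 0 < n ∧ QuotientGroup.mk' ((⊤ : Subgroup G).lowerCentralSeries (k + 1 + 1)) ⁅p, y⁆ ^ n ∈
      (U.lowerCentralSeries (k + 1)).map (QuotientGroup.mk' _) := by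
  obtain ⟨n, hn, hyn⟩ := hU y
  obtain ⟨z, hz, u, hu, hzu⟩ := mem_sup_of_normal_left.mp hpm
  refine ⟨m * n, Nat.mul_pos hm hn, ⁅u, y ^ n⁆, commutator_mem_commutator hu hyn, ?_⟩
  set π := QuotientGroup.mk' ((⊤ : Subgroup G).lowerCentralSeries (k + 1 + 1))
  have hpow_central (j : ℕ) : ⁅π p ^ j, π y⁆ ∈ center _ := by
    rw [← map_pow, ← map_commutatorElement]
    exact QuotientGroup.mk'_mem_center_of_mem_lowerCentralSeries
      (commutator_mem_commutator (pow_mem hp j) (mem_top y))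
  rw [eq_inv_mul_of_mul_eq hzu, map_commutatorElement, map_mul, map_pow, map_pow,
    commutatorElement_mul_left_of_mem_center
      (QuotientGroup.mk'_mem_center_of_mem_lowerCentralSeries (inv_mem hz)),
    commutatorElement_pow_pow_of_mem_center hpow_central, map_commutatorElement]

theorem exists_pow_mem_lowerCentralSeries_sup (hU : ∀ g : G, ∃ n, 0 < n ∧ g ^ n ∈ U)
    (k : ℕ) {b : G} (hb : b ∈ (⊤ : Subgroup G).lowerCentralSeries k) :
    ∃ n, 0 < n ∧ b ^ n ∈ (⊤ : Subgroup G).lowerCentralSeries (k + 1) ⊔ U.lowerCentralSeries k := by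
  induction k generalizing b with
  | zero =>
    obtain ⟨n, hn, hbn⟩ := hU b
    exact ⟨n, hn, mem_sup_right hbn⟩
  | succ k ih =>
    simp_rw [← QuotientGroup.comap_map_mk', mem_comap, map_pow]
    set π := QuotientGroup.mk' ((⊤ : Subgroup G).lowerCentralSeries (k + 1 + 1))
    set S := π ''
      {x | ∃ p ∈ (⊤ : Subgroup G).lowerCentralSeries k, ∃ y ∈ (⊤ : Subgroup G), ⁅p, y⁆ = x}
    have hS_central : closure S ≤ center _ := by
      rw [closure_le]
      rintro _ ⟨_, ⟨p, hp, y, -, rfl⟩, rfl⟩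
      exact QuotientGroup.mk'_mem_center_of_mem_lowerCentralSeries
        (commutator_mem_commutator hp (mem_top y))
    refine exists_pow_mem_of_mem_closure (fun x _ y hy => mem_center_iff.mp (hS_central hy) x)
      ?_ (by rw [← MonoidHom.map_closure]; exact mem_map_of_mem π hb)
    rintro _ ⟨_, ⟨p, hp, y, -, rfl⟩, rfl⟩
    obtain ⟨m, hm, hpm⟩ := ih hp
    exact exists_pow_mk'_commutatorElement_mem_map hU hp hm hpm y

theorem top_lowerCentralSeries_eq_bot_of_lowerCentralSeries_eq_bot
    (hU : ∀ g : G, ∃ n, 0 < n ∧ g ^ n ∈ U) (hTF : ∀ g : G, g ≠ 1 → ¬IsOfFinOrder g) {d : ℕ}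
    (hUd : U.lowerCentralSeries d = ⊥) (hd : (⊤ : Subgroup G).lowerCentralSeries (d + 1) = ⊥) :
    (⊤ : Subgroup G).lowerCentralSeries d = ⊥ := by
  refine (eq_bot_iff_forall _).mpr fun b hb => of_not_not fun hb1 => hTF b hb1 ?_
  obtain ⟨n, hn, hbn⟩ := exists_pow_mem_lowerCentralSeries_sup hU d hb
  rw [hUd, hd, sup_bot_eq, mem_bot] at hbn
  exact isOfFinOrder_iff_pow_eq_one.mpr ⟨n, hn, hbn⟩

end Subgroup

theorem stmt_13_general {V : Type*} [Group V] [Group.IsNilpotent V]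
    (hTF : ∀ g : V, g ≠ 1 → ¬IsOfFinOrder g)
    (U : Subgroup V) [U.FiniteIndex] :
    Group.nilpotencyClass U = Group.nilpotencyClass V := by
  refine le_antisymm (nilpotencyClass_le U) (not_lt.mp fun hlt => ?_)
  obtain ⟨d, hd⟩ := Nat.exists_eq_add_one_of_ne_zero (Nat.ne_zero_of_lt hlt)
  have hU (g : V) : ∃ n, 0 < n ∧ g ^ n ∈ U :=
    (exists_pow_mem_of_index_ne_zero FiniteIndex.index_ne_zero g).imp fun _ h => ⟨h.1, h.2.2⟩
  have hVd : (⊤ : Subgroup V).lowerCentralSeries d = ⊥ :=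
    top_lowerCentralSeries_eq_bot_of_lowerCentralSeries_eq_bot hU hTF
      (lowerCentralSeries_eq_bot_of_nilpotencyClass_le (by omega))
      (hd ▸ Subgroup.lowerCentralSeries_nilpotencyClass)
  have := Subgroup.lowerCentralSeries_eq_bot_iff_nilpotencyClass_le.mp hVd
  omega

/-- In a torsion-free nilpotent group, a normal subgroup of finite index has the same
nilpotency class as the whole group. -/
theorem stmt_13 {V : Type*} [Group V] [Group.IsNilpotent V]
    (hTF : ∀ g : V, g ≠ 1 → ¬IsOfFinOrder g)
    (U : Subgroup V) [U.Normal] [U.FiniteIndex] :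
    Group.nilpotencyClass U = Group.nilpotencyClass V :=
  stmt_13_general hTF U
end

section
/- Let V be a torsion-free nilpotent group, U a normal subgroup of finite index, and α an automorphism of V that centralizes U. Then α is the identity. -/
/-!
In a torsion-free nilpotent group, `n`-th roots are unique: if `y` commutes with `x ^ n`, then so
does the commutator `w = ⁅y, x⁆`, which lies one step lower in the upper central series; by
induction along that series `w` commutes with `x`, so `(y * x * y⁻¹) ^ n = w ^ n * x ^ n` forces
`w ^ n = 1`, hence `w = 1`. Since every `v` has a power `v ^ k ∈ U` with `k > 0`, the automorphism
`α` fixes `v ^ k = (α v) ^ k`, and uniqueness of roots gives `α v = v`.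
-/

open scoped commutatorElement

section

variable {G : Type*} [Group G]

theorem eq_one_of_pow_eq_one_of_not_isOfFinOrder (hTF : ∀ g : G, g ≠ 1 → ¬IsOfFinOrder g)
    {g : G} {n : ℕ} (hn : n ≠ 0) (h : g ^ n = 1) : g = 1 :=
  not_not.1 fun hg => hTF g hg (isOfFinOrder_iff_pow_eq_one.2 ⟨n, hn.bot_lt, h⟩)

theorem commute_of_commute_pow_of_mem_upperCentralSeries
    (hTF : ∀ g : G, g ≠ 1 → ¬IsOfFinOrder g) {x y : G} {n d : ℕ} (hn : n ≠ 0)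
    (hy : y ∈ Subgroup.upperCentralSeries G d) (hyx : Commute y (x ^ n)) : Commute y x := by
  induction d generalizing y with
  | zero =>
    rw [Subgroup.upperCentralSeries_zero, Subgroup.mem_bot] at hy
    exact hy ▸ Commute.one_left x
  | succ d ih =>
    have hxx : Commute x (x ^ n) := Commute.self_pow x n
    have hw : Commute ⁅y, x⁆ (x ^ n) :=
      ((hyx.mul_left hxx).mul_left hyx.inv_left).mul_left hxx.inv_left
    have hwx : Commute ⁅y, x⁆ x := ih (Subgroup.mem_upperCentralSeries_succ_iff.1 hy x) hw
    have hwn : ⁅y, x⁆ ^ n * x ^ n = x ^ n :=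
      calc ⁅y, x⁆ ^ n * x ^ n = (⁅y, x⁆ * x) ^ n := hwx.mul_pow n |>.symm
        _ = (y * x * y⁻¹) ^ n := by rw [commutatorElement_def]; group
        _ = y * x ^ n * y⁻¹ := conj_pow
        _ = x ^ n := by rw [hyx.eq, mul_inv_cancel_right]
    exact commutatorElement_eq_one_iff_commute.1 <|
      eq_one_of_pow_eq_one_of_not_isOfFinOrder hTF hn (mul_eq_right.1 hwn)

theorem Group.IsNilpotent.commute_of_commute_pow [Group.IsNilpotent G]
    (hTF : ∀ g : G, g ≠ 1 → ¬IsOfFinOrder g) {x y : G} {n : ℕ} (hn : n ≠ 0)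
    (h : Commute y (x ^ n)) : Commute y x := by
  obtain ⟨d, hd⟩ := Group.IsNilpotent.nilpotent G
  exact commute_of_commute_pow_of_mem_upperCentralSeries hTF hn (hd ▸ Subgroup.mem_top y) h

theorem Group.IsNilpotent.isMulTorsionFree [Group.IsNilpotent G]
    (hTF : ∀ g : G, g ≠ 1 → ¬IsOfFinOrder g) : IsMulTorsionFree G where
  pow_left_injective n hn x y hxy := by
    replace hxy : x ^ n = y ^ n := hxy
    have hyx : Commute y x := commute_of_commute_pow hTF hn (hxy ▸ Commute.self_pow y n)
    have hn1 : (x * y⁻¹) ^ n = 1 := by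
      rw [hyx.symm.inv_right.mul_pow, inv_pow, hxy, mul_inv_cancel]
    exact mul_inv_eq_one.1 (eq_one_of_pow_eq_one_of_not_isOfFinOrder hTF hn hn1)

end

theorem stmt_14_general {V : Type*} [Group V] [Group.IsNilpotent V]
    (hTF : ∀ g : V, g ≠ 1 → ¬IsOfFinOrder g)
    (U : Subgroup V) [U.FiniteIndex]
    (α : MulAut V) (hα : ∀ u ∈ U, α u = u) :
    α = 1 := by
  have := Group.IsNilpotent.isMulTorsionFree hTF
  ext v
  obtain ⟨k, hk, -, hvk⟩ := U.exists_pow_mem_of_index_ne_zero U.index_ne_zero_of_finite v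
  exact pow_left_injective hk.ne' (by simpa only [MulAut.one_apply, map_pow] using hα _ hvk)

/-- If `V` is torsion-free nilpotent, `U` a normal subgroup of finite index and `α` an
automorphism of `V` centralizing `U`, then `α` is the identity. -/
theorem stmt_14 {V : Type*} [Group V] [Group.IsNilpotent V]
    (hTF : ∀ g : V, g ≠ 1 → ¬IsOfFinOrder g)
    (U : Subgroup V) [U.Normal] [U.FiniteIndex]
    (α : MulAut V) (hα : ∀ u ∈ U, α u = u) :
    α = 1 :=
  stmt_14_general hTF U α hα
end

section
/- Let G be a group with an ascending series of characteristic subgroups with abelian factors. Then G contains a characteristic subgroup U which is nilpotent of class at most two and satisfies C_G(U) = ζ(U), the center of U. -/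
/-!
Among the characteristic subgroups `V` of `G` with `⁅V, V⁆ ≤ C_G(V)` (class at most two) choose a
maximal one by Zorn's lemma. To see `C_G(V) ≤ V`, show `G_α ∩ C_G(V) ≤ V` by transfinite
induction along the series. At a successor, `K = G_{α+1} ∩ C_G(V)` is characteristic, centralizes
`V`, and `⁅K, K⁆ ≤ G_α ∩ C_G(V) ≤ V`; then `V ⊔ K` is again characteristic of class at most two,
so `K ≤ V` by maximality. Limit stages are unions.
-/

open Order
open scoped commutatorElement

theorem commutatorElement_mul_mul_of_commute {G : Type*} [Group G] {v k v' k' : G}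
    (hvk : Commute v k) (hvk' : Commute v k') (hv'k : Commute v' k) (hv'k' : Commute v' k') :
    ⁅v * k, v' * k'⁆ = ⁅v, v'⁆ * ⁅k, k'⁆ := by
  have hmul : (v * k) * (v' * k') = (v * v') * (k * k') := hv'k.symm.mul_mul_mul_comm v k'
  have hinv : (v * k)⁻¹ * (v' * k')⁻¹ = (v⁻¹ * v'⁻¹) * (k⁻¹ * k'⁻¹) := by
    rw [mul_inv_rev, mul_inv_rev, ← hvk.inv_inv.eq, ← hv'k'.inv_inv.eq]
    exact hv'k.symm.inv_inv.mul_mul_mul_comm v⁻¹ k'⁻¹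
  have hcomm : Commute (k * k') (v⁻¹ * v'⁻¹) :=
    (hvk.symm.inv_right.mul_right hv'k.symm.inv_right).mul_left
      (hvk'.symm.inv_right.mul_right hv'k'.symm.inv_right)
  calc ⁅v * k, v' * k'⁆
      = ((v * k) * (v' * k')) * ((v * k)⁻¹ * (v' * k')⁻¹) := by
        rw [commutatorElement_def, mul_assoc]
    _ = ((v * v') * (k * k')) * ((v⁻¹ * v'⁻¹) * (k⁻¹ * k'⁻¹)) := by rw [hmul, hinv]
    _ = ((v * v') * (v⁻¹ * v'⁻¹)) * ((k * k') * (k⁻¹ * k'⁻¹)) :=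
        hcomm.mul_mul_mul_comm (v * v') (k⁻¹ * k'⁻¹)
    _ = ⁅v, v'⁆ * ⁅k, k'⁆ := by
        rw [commutatorElement_def, commutatorElement_def]
        group

namespace Subgroup

variable {G : Type*} [Group G]

theorem le_centralizer_sup_iff {H V K : Subgroup G} :
    H ≤ centralizer ((V ⊔ K : Subgroup G) : Set G) ↔
      H ≤ centralizer (V : Set G) ∧ H ≤ centralizer (K : Set G) := by
  rw [le_centralizer_iff, sup_le_iff, le_centralizer_iff (H := V), le_centralizer_iff (H := K)]

theorem commutator_sup_le_centralizer_sup {V K : Subgroup G} [V.Normal]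
    (hKV : K ≤ centralizer (V : Set G)) (hV : ⁅V, V⁆ ≤ centralizer (V : Set G))
    (hK : ⁅K, K⁆ ≤ V) :
    ⁅V ⊔ K, V ⊔ K⁆ ≤ centralizer ((V ⊔ K : Subgroup G) : Set G) := by
  have hVK : V ≤ centralizer (K : Set G) := le_centralizer_iff.mp hKV
  have hVV : ⁅V, V⁆ ≤ centralizer ((V ⊔ K : Subgroup G) : Set G) :=
    le_centralizer_sup_iff.mpr ⟨hV, (commutator_le_self V).trans hVK⟩
  have hKK : ⁅K, K⁆ ≤ centralizer ((V ⊔ K : Subgroup G) : Set G) :=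
    le_centralizer_sup_iff.mpr ⟨(commutator_le_self K).trans hKV, hK.trans hVK⟩
  have hcomm {v k : G} (hv : v ∈ V) (hk : k ∈ K) : Commute v k :=
    mem_centralizer_iff.mp (hKV hk) v hv
  rw [commutator_le]
  intro x hx y hy
  obtain ⟨v, hv, k, hk, rfl⟩ := mem_sup_of_normal_left.mp hx
  obtain ⟨v', hv', k', hk', rfl⟩ := mem_sup_of_normal_left.mp hy
  rw [commutatorElement_mul_mul_of_commute (hcomm hv hk) (hcomm hv hk') (hcomm hv' hk)
    (hcomm hv' hk')]
  exact mul_mem (hVV (commutator_mem_commutator hv hv'))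
    (hKK (commutator_mem_commutator hk hk'))

theorem commutator_sSup_le_centralizer_sSup {c : Set (Subgroup G)} (hne : c.Nonempty)
    (hc : DirectedOn (· ≤ ·) c) (h : ∀ H ∈ c, ⁅H, H⁆ ≤ centralizer (H : Set G)) :
    ⁅sSup c, sSup c⁆ ≤ centralizer ((sSup c : Subgroup G) : Set G) := by
  rw [commutator_le]
  intro x hx y hy
  rw [mem_centralizer_iff]
  intro z hz
  obtain ⟨Hx, hHx, hxH⟩ := (mem_sSup_of_directedOn hne hc).mp hx
  obtain ⟨Hy, hHy, hyH⟩ := (mem_sSup_of_directedOn hne hc).mp hy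
  obtain ⟨Hz, hHz, hzH⟩ := (mem_sSup_of_directedOn hne hc).mp hz
  obtain ⟨Hxy, hHxy, hxHxy, hyHxy⟩ := hc Hx hHx Hy hHy
  obtain ⟨H, hH, hxyH, hzH'⟩ := hc Hxy hHxy Hz hHz
  exact mem_centralizer_iff.mp
    (h H hH (commutator_mem_commutator (hxyH (hxHxy hxH)) (hxyH (hyHxy hyH)))) z (hzH' hzH)

def IsCharacteristicClassTwo (H : Subgroup G) : Prop :=
  H.Characteristic ∧ ⁅H, H⁆ ≤ centralizer (H : Set G)

variable (G) in
theorem exists_maximal_isCharacteristicClassTwo :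
    ∃ V : Subgroup G, Maximal IsCharacteristicClassTwo V := by
  have hbot : IsCharacteristicClassTwo (⊥ : Subgroup G) :=
    ⟨inferInstance, by rw [commutator_bot_left]; exact bot_le⟩
  obtain ⟨V, -, hV⟩ := zorn_le_nonempty₀ {H : Subgroup G | IsCharacteristicClassTwo H}
    (fun c hcF hc H hH => ⟨sSup c,
      ⟨characteristic_sSup fun K hK => (hcF hK).1,
        commutator_sSup_le_centralizer_sSup ⟨H, hH⟩ hc.directedOn fun K hK => (hcF hK).2⟩,
      fun _ => le_sSup⟩) ⊥ hbot
  exact ⟨V, hV⟩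

theorem le_of_maximal_isCharacteristicClassTwo {V K : Subgroup G}
    (hV : Maximal IsCharacteristicClassTwo V) [K.Characteristic]
    (hKV : K ≤ centralizer (V : Set G)) (hKK : ⁅K, K⁆ ≤ V) : K ≤ V := by
  obtain ⟨hVchar, hVV⟩ := hV.prop
  have hsup : IsCharacteristicClassTwo (V ⊔ K) :=
    ⟨inferInstance, commutator_sup_le_centralizer_sup hKV hVV hKK⟩
  exact le_sup_right.trans (hV.2 hsup le_sup_left)

theorem coe_subset_of_succ_subset {s : Ordinal → Subgroup G} (hmono : Monotone s)
    (hlim : ∀ o : Ordinal, IsSuccLimit o → s o = ⨆ (o' : Ordinal) (_ : o' < o), s o')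
    {T : Set G} (hzero : (s 0 : Set G) ⊆ T)
    (hsucc : ∀ o, (s o : Set G) ⊆ T → (s (o + 1) : Set G) ⊆ T) (o : Ordinal) :
    (s o : Set G) ⊆ T := by
  induction o using Ordinal.limitRecOn with
  | zero => exact hzero
  | add_one o ih => exact hsucc o ih
  | limit o ho ih =>
    intro x hx
    rw [SetLike.mem_coe, hlim o ho, iSup_subtype'] at hx
    have : Nonempty {o' // o' < o} := ⟨⟨0, ho.bot_lt⟩⟩
    obtain ⟨⟨o', ho'⟩, hxo'⟩ :=
      (mem_iSup_of_directed (hmono.comp (Subtype.mono_coe _)).directed_le).mp hx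
    exact ih o' ho' hxo'

end Subgroup

/-- (Hartley) If a group `G` has an ascending series of characteristic subgroups with
abelian factors, then `G` contains a characteristic subgroup `U`, nilpotent of class at
most two, with `C_G(U) = ζ(U)`. -/
theorem stmt_15 {G : Type*} [Group G] (l : Ordinal) (s : Ordinal → Subgroup G)
    (hmono : Monotone s) (h0 : s 0 = ⊥) (htop : s l = ⊤)
    (hchar : ∀ o : Ordinal, (s o).Characteristic)
    -- abelian factors: `s (o+1) / s o` is abelian
    (hab : ∀ o : Ordinal, ⁅s (o + 1), s (o + 1)⁆ ≤ s o)
    -- continuity at limit ordinals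
    (hlim : ∀ o : Ordinal, Order.IsSuccLimit o → s o = ⨆ (o' : Ordinal) (_ : o' < o), s o') :
    ∃ U : Subgroup G, U.Characteristic ∧ lowerCentralSeries U 2 = ⊥ ∧
      Subgroup.centralizer (U : Set G) = U ⊓ Subgroup.centralizer (U : Set G) := by
  obtain ⟨V, hV⟩ := Subgroup.exists_maximal_isCharacteristicClassTwo G
  obtain ⟨hVchar, hVV⟩ := hV.prop
  let C := Subgroup.centralizer (V : Set G)
  have hseries : ∀ o, (s o : Set G) ⊆ {x | x ∈ C → x ∈ V} := by
    refine Subgroup.coe_subset_of_succ_subset hmono hlim (by simp [h0]) fun o ho => ?_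
    have := hchar (o + 1)
    have hKK : ⁅s (o + 1) ⊓ C, s (o + 1) ⊓ C⁆ ≤ V := fun y hy =>
      ho (Subgroup.commutator_mono inf_le_left inf_le_left |>.trans (hab o) hy)
        ((Subgroup.commutator_le_self _).trans inf_le_right hy)
    exact fun x hx hxC =>
      Subgroup.le_of_maximal_isCharacteristicClassTwo hV inf_le_right hKK ⟨hx, hxC⟩
  have hCV : C ≤ V := fun x hxC => hseries l (by simp [htop]) hxC
  -- `lowerCentralSeries V 2` unfolds to `⁅⁅V, V⁆, V⁆`
  exact ⟨V, hVchar, Subgroup.commutator_eq_bot_iff_le_centralizer.mpr hVV, (inf_eq_right.mpr hCV).symm⟩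
end

section
/- Let H be a finitely generated group with a normal subgroup N such that H/N is nilpotent and H is metanilpotent (nilpotent-by-nilpotent). Suppose H = R⟨h⟩ where R is the Hirsch–Plotkin radical of H, R is nilpotent, and N⟨h⟩ is locally nilpotent. Then H is nilpotent. -/
/-- A group is locally nilpotent if every finitely generated subgroup is nilpotent. -/
def IsLocallyNilpotent (G : Type*) [Group G] : Prop :=
  ∀ S : Subgroup G, S.FG → Group.IsNilpotent S

/-!
The heart of the proof: a finitely generated group `G = U⟨h⟩` with `U` normal and nilpotent
and `G'⟨h⟩` locally nilpotent is nilpotent. Induct on the class of `U`. By induction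
`G / C_G(U)` is nilpotent, so `γ_e(G) ≤ C_G(U)` for some `e`. Since `G` is finitely generated,
`γ_{e+1}(G)` is the normal closure of a finite set `S`, and `⟨S, h⟩ ≤ G'⟨h⟩` is nilpotent, so
`[s, h, …, h] = 1` for every `s ∈ S` once there are `n` copies of `h`. An element of `C_G(U)`
commutes with `G` modulo a normal subgroup as soon as it commutes with `h`, hence `γ_{e+1+k}(G)`
lies in the normal closure of the `[s, h, …, h]` with at least `k` copies of `h`, and
`γ_{e+1+n}(G) = 1`.

For the theorem, descending induction on `i` shows that `γ_i(H)⟨h⟩` is locally nilpotent: it lies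
in `N⟨h⟩` for large `i`, and a finitely generated subgroup `T ∋ h` of `γ_i(H)⟨h⟩` is
`(R ∩ T)⟨h⟩` with `T' ≤ γ_{i+1}(H)`, so the first paragraph applies to `T`. At `i = 0` this
says that `H` is locally nilpotent, hence nilpotent.
-/

open scoped commutatorElement

namespace Subgroup

variable {G G' : Type*} [Group G] [Group G']

theorem FG.map {S : Subgroup G} (hS : S.FG) (f : G →* G') : (S.map f).FG := by
  obtain ⟨X, rfl, hX⟩ := (fg_iff S).mp hS
  exact (fg_iff _).mpr ⟨f '' X, (MonoidHom.map_closure f X).symm, hX.image f⟩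

theorem isNilpotent_map {S : Subgroup G} (hS : Group.IsNilpotent S) (f : G →* G') :
    Group.IsNilpotent (S.map f) := by
  obtain ⟨n, hn⟩ := (isNilpotent_iff_lowerCentralSeries S).mp hS
  exact isNilpotent_of_lowerCentralSeries_eq_bot (n := n) (by
    rw [← map_lowerCentralSeries, hn, map_bot])

theorem isNilpotent_of_le {S T : Subgroup G} (hST : S ≤ T) (hT : Group.IsNilpotent T) :
    Group.IsNilpotent S := by
  obtain ⟨n, hn⟩ := (isNilpotent_iff_lowerCentralSeries T).mp hT
  exact isNilpotent_of_lowerCentralSeries_eq_bot (n := n)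
    (le_bot_iff.mp (hn ▸ lowerCentralSeries_mono n hST))

theorem isNilpotent_map_subtype_iff {T : Subgroup G} {S : Subgroup T} :
    Group.IsNilpotent (S.map T.subtype) ↔ Group.IsNilpotent S :=
  (Group.isNilpotent_congr (equivMapOfInjective S T.subtype T.subtype_injective)).symm

theorem isLocallyNilpotent_iff_forall_fg_le {K : Subgroup G} :
    IsLocallyNilpotent K ↔ ∀ S : Subgroup G, S.FG → S ≤ K → Group.IsNilpotent S := by
  refine ⟨fun hK S hS hSK => ?_, fun hK S hS => ?_⟩
  · have : Group.FG S := (Group.fg_iff_subgroup_fg S).mpr hS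
    have hfg : (S.subgroupOf K).FG := (Group.fg_iff_subgroup_fg _).mp
      (Group.fg_of_surjective (f := (subgroupOfEquivOfLe hSK).symm.toMonoidHom)
        (subgroupOfEquivOfLe hSK).symm.surjective)
    exact (Group.isNilpotent_congr (subgroupOfEquivOfLe hSK)).mp (hK _ hfg)
  · exact isNilpotent_map_subtype_iff.mp (hK _ (hS.map K.subtype) (map_subtype_le S))

theorem _root_.IsLocallyNilpotent.mono {K L : Subgroup G} (hKL : K ≤ L)
    (hL : IsLocallyNilpotent L) : IsLocallyNilpotent K :=
  isLocallyNilpotent_iff_forall_fg_le.mpr fun S hS hSK =>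
    isLocallyNilpotent_iff_forall_fg_le.mp hL S hS (hSK.trans hKL)

theorem _root_.IsLocallyNilpotent.map {K : Subgroup G} (hK : IsLocallyNilpotent K) (f : G →* G') :
    IsLocallyNilpotent (K.map f) := by
  refine isLocallyNilpotent_iff_forall_fg_le.mpr fun S' hS' hS'K => ?_
  obtain ⟨X', rfl, hX'⟩ := (fg_iff S').mp hS'
  have hX'K : X' ⊆ f '' K := (subset_closure.trans hS'K :)
  obtain ⟨X, hXK, hX, rfl⟩ := hX'.exists_subset_finite_image_eq hX'K
  rw [← MonoidHom.map_closure]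
  exact isNilpotent_map (isLocallyNilpotent_iff_forall_fg_le.mp hK _
    ((fg_iff _).mpr ⟨X, rfl, hX⟩) ((closure_le K).mpr hXK)) f

theorem _root_.IsLocallyNilpotent.of_map_subtype {T : Subgroup G} {K : Subgroup T}
    (hK : IsLocallyNilpotent (K.map T.subtype)) : IsLocallyNilpotent K :=
  isLocallyNilpotent_iff_forall_fg_le.mpr fun _ hS hSK =>
    isNilpotent_map_subtype_iff.mp (isLocallyNilpotent_iff_forall_fg_le.mp hK _ (hS.map _)
      (map_mono hSK))

theorem exists_lowerCentralSeries_le_of_isNilpotent_quotient {N : Subgroup G} [N.Normal]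
    (hN : Group.IsNilpotent (G ⧸ N)) : ∃ c, lowerCentralSeries ⊤ c ≤ N := by
  obtain ⟨c, hc⟩ := nilpotent_iff_lowerCentralSeries.mp hN
  refine ⟨c, ?_⟩
  rw [← QuotientGroup.ker_mk' N, ← map_eq_bot_iff, map_lowerCentralSeries,
    map_top_of_surjective _ (QuotientGroup.mk'_surjective N), hc]

theorem commutator_normalClosure_top_le {M : Subgroup G} [M.Normal] {S X : Set G}
    (hX : closure X = ⊤) (hSX : ∀ s ∈ S, ∀ x ∈ X, ⁅s, x⁆ ∈ M) :
    ⁅normalClosure S, ⊤⁆ ≤ M := by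
  set π := QuotientGroup.mk' M
  have hZ := upperCentralSeriesStep_eq_comap_center M
  have : (upperCentralSeriesStep M).Normal := hZ ▸ Normal.comap inferInstance π
  have hS : normalClosure S ≤ upperCentralSeriesStep M := by
    refine normalClosure_le_normal fun s hs => ?_
    have hcent : closure X ≤ (centralizer {π s}).comap π := (closure_le _).mpr fun x hx => by
      have : ⁅π s, π x⁆ = 1 := by
        rw [← map_commutatorElement]
        exact (QuotientGroup.eq_one_iff _).mpr (hSX s hs x hx)
      exact mem_centralizer_singleton_iff.mpr (commutatorElement_eq_one_iff_mul_comm.mp this).symm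
    rw [hX] at hcent
    rw [SetLike.mem_coe, hZ, mem_comap, mem_center_iff, QuotientGroup.forall_mk]
    exact fun g => mem_centralizer_singleton_iff.mp (hcent (mem_top g))
  exact commutator_le.mpr fun z hz g _ => hS hz g

theorem exists_finite_normalClosure_eq_lowerCentralSeries [Group.FG G] (k : ℕ) :
    ∃ S : Set G, S.Finite ∧ normalClosure S = lowerCentralSeries ⊤ k := by
  obtain ⟨X, hX, hXfin⟩ := Group.fg_iff.mp ‹Group.FG G›
  induction k with
  | zero => exact ⟨X, hXfin, eq_top_iff.mpr (hX ▸ closure_le_normalClosure)⟩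
  | succ k ih =>
    obtain ⟨S, hSfin, hS⟩ := ih
    refine ⟨Set.image2 (⁅·, ·⁆) S X, hSfin.image2 _ hXfin, le_antisymm ?_ ?_⟩
    · refine normalClosure_le_normal ?_
      rintro _ ⟨s, hs, x, -, rfl⟩
      exact commutator_mem_commutator (hS ▸ subset_normalClosure hs) (mem_top x)
    · rw [lowerCentralSeries_succ, ← hS]
      exact commutator_normalClosure_top_le hX fun s hs x hx =>
        subset_normalClosure (Set.mem_image2_of_mem hs hx)

theorem iterate_commutator_mem_lowerCentralSeries {S : Subgroup G} {x h : G} (hx : x ∈ S)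
    (hh : h ∈ S) (j : ℕ) : (⁅·, h⁆)^[j] x ∈ S.lowerCentralSeries j := by
  induction j with
  | zero => exact hx
  | succ j ih =>
    rw [Function.iterate_succ_apply']
    exact commutator_mem_commutator ih hh

theorem iterate_commutator_mem_centralizer {U : Subgroup G} [U.Normal] {x : G}
    (hx : x ∈ centralizer U) (h : G) (j : ℕ) : (⁅·, h⁆)^[j] x ∈ centralizer U := by
  induction j with
  | zero => exact hx
  | succ j ih =>
    rw [Function.iterate_succ_apply', commutatorElement_def, mul_assoc, mul_assoc, ← mul_assoc h]
    exact mul_mem ih (Normal.conj_mem inferInstance _ (inv_mem ih) h)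

theorem lowerCentralSeries_add_le_normalClosure_iterate_commutator {U : Subgroup G} [U.Normal]
    {h : G} (hgen : U ⊔ closure {h} = ⊤) {S : Set G} (hSU : S ⊆ (centralizer U : Subgroup G))
    {e : ℕ} (he : lowerCentralSeries ⊤ e ≤ normalClosure S) (k : ℕ) :
    lowerCentralSeries ⊤ (e + k) ≤
      normalClosure {x | ∃ s ∈ S, ∃ j, k ≤ j ∧ (⁅·, h⁆)^[j] s = x} := by
  induction k with
  | zero => exact he.trans (normalClosure_mono fun s hs => ⟨s, hs, 0, le_rfl, rfl⟩)
  | succ k ih =>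
    refine (commutator_mono ih le_rfl).trans
      (commutator_normalClosure_top_le (X := U ∪ {h}) (by rw [closure_union, closure_eq, hgen]) ?_)
    rintro _ ⟨s, hs, j, hkj, rfl⟩ y (hy | rfl)
    · rw [commutatorElement_eq_one_iff_mul_comm.mpr
        (iterate_commutator_mem_centralizer (hSU hs) h j y hy).symm]
      exact one_mem _
    · exact subset_normalClosure ⟨s, hs, j + 1, by omega, Function.iterate_succ_apply' _ _ _⟩

theorem isNilpotent_of_lowerCentralSeries_le_centralizer [Group.FG G] {U : Subgroup G} [U.Normal]
    {h : G} (hgen : U ⊔ closure {h} = ⊤)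
    (hloc : IsLocallyNilpotent ↥(_root_.commutator G ⊔ closure {h})) {e : ℕ}
    (he : lowerCentralSeries ⊤ e ≤ (centralizer U : Subgroup G)) : Group.IsNilpotent G := by
  obtain ⟨S, hSfin, hS⟩ := exists_finite_normalClosure_eq_lowerCentralSeries (G := G) (e + 1)
  have hSγ : S ⊆ ((⊤ : Subgroup G).lowerCentralSeries (e + 1) : Set G) := hS ▸ subset_normalClosure
  obtain ⟨n, hn⟩ := (isNilpotent_iff_lowerCentralSeries (closure (S ∪ {h}))).mp <|
    isLocallyNilpotent_iff_forall_fg_le.mp hloc _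
      ((fg_iff _).mpr ⟨_, rfl, hSfin.union (Set.finite_singleton h)⟩)
      ((closure_le _).mpr (Set.union_subset
        (hSγ.trans fun _ hx =>
          mem_sup_left (lowerCentralSeries_antitone ⊤ (Nat.le_add_left 1 e) hx))
        (Set.singleton_subset_iff.mpr (mem_sup_right (mem_closure_singleton_self h)))))
  have hSU : S ⊆ (centralizer U : Subgroup G) :=
    hSγ.trans fun x hx => he (lowerCentralSeries_antitone ⊤ e.le_succ hx)
  refine nilpotent_iff_lowerCentralSeries.mpr ⟨e + 1 + n, le_bot_iff.mp ?_⟩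
  refine (lowerCentralSeries_add_le_normalClosure_iterate_commutator hgen hSU hS.ge n).trans
    (normalClosure_le_normal ?_)
  rintro _ ⟨s, hs, j, hnj, rfl⟩
  have := lowerCentralSeries_antitone (closure (S ∪ {h})) hnj <|
    iterate_commutator_mem_lowerCentralSeries (subset_closure (Set.mem_union_left {h} hs))
      (subset_closure (Set.mem_union_right S rfl)) j
  rwa [hn] at this

theorem isNilpotent_of_normal_sup_closure_eq_top [Group.FG G] {U : Subgroup G} [U.Normal]
    (hU : Group.IsNilpotent U) {h : G} (hgen : U ⊔ closure {h} = ⊤)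
    (hloc : IsLocallyNilpotent ↥(_root_.commutator G ⊔ closure {h})) : Group.IsNilpotent G := by
  obtain ⟨n, hn⟩ := (isNilpotent_iff_lowerCentralSeries U).mp hU
  clear hU
  induction n generalizing G with
  | zero =>
    refine isNilpotent_of_lowerCentralSeries_le_centralizer hgen hloc (e := 0) ?_
    rw [lowerCentralSeries_zero] at hn
    simp [hn]
  | succ n ih =>
    set π := QuotientGroup.mk' (centralizer U : Subgroup G)
    have hπ : Function.Surjective π := QuotientGroup.mk'_surjective _
    have : (U.map π).Normal := Normal.map inferInstance π hπ
    have hQ : Group.IsNilpotent (G ⧸ (centralizer U : Subgroup G)) := by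
      refine ih (U := U.map π) (h := π h) ?_ ?_ ?_
      · rw [← Set.image_singleton, ← MonoidHom.map_closure, ← map_sup, hgen,
          map_top_of_surjective π hπ]
      · have := hloc.map π
        rwa [map_sup, MonoidHom.map_closure, Set.image_singleton, _root_.commutator_def,
          map_commutator, map_top_of_surjective π hπ, ← _root_.commutator_def] at this
      · -- `⁅U.lowerCentralSeries n, U⁆ = ⊥` puts `U.lowerCentralSeries n` into the kernel `C_G(U)`
        rw [← map_lowerCentralSeries, map_eq_bot_iff, QuotientGroup.ker_mk',
          ← commutator_eq_bot_iff_le_centralizer, ← lowerCentralSeries_succ, hn]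
    obtain ⟨e, he⟩ := exists_lowerCentralSeries_le_of_isNilpotent_quotient hQ
    exact isNilpotent_of_lowerCentralSeries_le_centralizer hgen hloc he

theorem commutator_sup_closure_singleton_le {A M : Subgroup G} [M.Normal] (hA : ⁅A, ⊤⁆ ≤ M)
    (h : G) : ⁅A ⊔ closure {h}, A ⊔ closure {h}⁆ ≤ M := by
  set π := QuotientGroup.mk' M
  have hπ : Function.Surjective π := QuotientGroup.mk'_surjective M
  have hA' : A.map π ≤ center (G ⧸ M) := by
    rwa [← commutator_top_right_eq_bot_iff_le_center, ← map_top_of_surjective π hπ,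
      ← map_commutator, map_eq_bot_iff, QuotientGroup.ker_mk']
  have hh' : closure {π h} ≤ centralizer (closure {π h}) := by
    rw [le_centralizer_iff_isMulCommutative, ← zpowers_eq_closure]
    infer_instance
  rw [← QuotientGroup.ker_mk' M, ← map_eq_bot_iff, map_commutator,
    commutator_eq_bot_iff_le_centralizer, map_sup, MonoidHom.map_closure, Set.image_singleton]
  exact sup_le (hA'.trans (center_le_centralizer _))
    (le_centralizer_iff.mp (sup_le (hA'.trans (center_le_centralizer _)) hh'))

theorem isLocallyNilpotent_sup_closure_of_commutator_le {R : Subgroup G} [R.Normal]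
    (hR : Group.IsNilpotent R) {h : G} (hgen : R ⊔ closure {h} = ⊤) {A B : Subgroup G}
    (hAB : ⁅A ⊔ closure {h}, A ⊔ closure {h}⁆ ≤ B) (hB : IsLocallyNilpotent ↥(B ⊔ closure {h})) :
    IsLocallyNilpotent ↥(A ⊔ closure {h}) := by
  refine isLocallyNilpotent_iff_forall_fg_le.mpr fun S hS hSA => ?_
  set T := S ⊔ closure {h}
  have hTA : T ≤ A ⊔ closure {h} := sup_le hSA le_sup_right
  have hhT : h ∈ T := mem_sup_right (mem_closure_singleton_self h)
  have : Group.FG T := (Group.fg_iff_subgroup_fg T).mpr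
    (hS.sup ((fg_iff _).mpr ⟨{h}, rfl, Set.finite_singleton h⟩))
  have hRT : R ⊓ T ⊔ closure {h} = T := by
    refine le_antisymm (sup_le inf_le_right le_sup_right) fun x hx => ?_
    obtain ⟨r, hr, c, hc, rfl⟩ :=
      mem_sup_of_normal_left.mp (hgen ▸ mem_top x : x ∈ R ⊔ closure {h})
    have hcT : c ∈ T := mem_sup_right hc
    exact mul_mem_sup ⟨hr, by simpa using mul_mem hx (inv_mem hcT)⟩ hc
  refine isNilpotent_of_le le_sup_left
    (isNilpotent_of_normal_sup_closure_eq_top (U := R.subgroupOf T) (h := ⟨h, hhT⟩) ?_ ?_ ?_)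
  · rw [← isNilpotent_map_subtype_iff, subgroupOf_map_subtype]
    exact isNilpotent_of_le inf_le_left hR
  · refine map_injective T.subtype_injective ?_
    rw [map_sup, subgroupOf_map_subtype, MonoidHom.map_closure, Set.image_singleton,
      ← MonoidHom.range_eq_map, range_subtype]
    exact hRT
  · refine IsLocallyNilpotent.of_map_subtype (hB.mono ?_)
    rw [map_sup, map_subtype_commutator, MonoidHom.map_closure, Set.image_singleton]
    exact sup_le_sup_right ((commutator_mono hTA hTA).trans hAB) _

end Subgroup

theorem stmt_17_general {H : Type*} [Group H] [Group.FG H]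
    (N : Subgroup H) (hN : N.Normal)
    (hHN : Group.IsNilpotent (H ⧸ N))
    (R : Subgroup H) (hRnormal : R.Normal)
    (h : H)
    (hgen : R ⊔ Subgroup.closure {h} = ⊤)
    (hRnilp : Group.IsNilpotent R)
    (hNh : IsLocallyNilpotent (N ⊔ Subgroup.closure {h} : Subgroup H)) :
    Group.IsNilpotent H := by
  obtain ⟨c, hc⟩ := Subgroup.exists_lowerCentralSeries_le_of_isNilpotent_quotient hHN
  have hloc : ∀ i ≤ c,
      IsLocallyNilpotent ↥((⊤ : Subgroup H).lowerCentralSeries i ⊔ Subgroup.closure {h}) := by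
    intro i hi
    induction hi using Nat.decreasingInduction with
    | self => exact hNh.mono (sup_le_sup_right hc _)
    | of_succ i _ ih =>
      exact Subgroup.isLocallyNilpotent_sup_closure_of_commutator_le hRnilp hgen
        (Subgroup.commutator_sup_closure_singleton_le le_rfl h) ih
  have htop := hloc 0 c.zero_le
  rw [Subgroup.lowerCentralSeries_zero, top_sup_eq] at htop
  exact Group.isNilpotent_top.mp
    (Subgroup.isLocallyNilpotent_iff_forall_fg_le.mp htop ⊤ (Group.fg_def.mp ‹_›) le_rfl)

/-- Let `H` be a finitely generated metanilpotent group, `N ⊴ H` with `H/N` nilpotent,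
and `H = R⟨h⟩` where `R` is the Hirsch–Plotkin radical of `H`. If `R` is nilpotent and
`N⟨h⟩` is locally nilpotent, then `H` is nilpotent. -/
theorem stmt_17 {H : Type*} [Group H] [Group.FG H]
    -- `H` is metanilpotent
    (hmeta : ∃ K : Subgroup H, ∃ _ : K.Normal, Group.IsNilpotent K ∧
      Group.IsNilpotent (H ⧸ K))
    (N : Subgroup H) (hN : N.Normal)
    (hHN : Group.IsNilpotent (H ⧸ N))
    (R : Subgroup H) (hRnormal : R.Normal)
    -- `R` is the Hirsch–Plotkin radical: the largest locally nilpotent normal subgroup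
    (hRln : IsLocallyNilpotent R)
    (hRmax : ∀ K : Subgroup H, K.Normal → IsLocallyNilpotent K → K ≤ R)
    (h : H)
    (hgen : R ⊔ Subgroup.closure {h} = ⊤)
    (hRnilp : Group.IsNilpotent R)
    (hNh : IsLocallyNilpotent (N ⊔ Subgroup.closure {h} : Subgroup H)) :
    Group.IsNilpotent H :=
  stmt_17_general N hN hHN R hRnormal h hgen hRnilp hNh
end
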